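/- Let Λ be a Nambu structure of order q on M, and let f₁,…,f_{q−1} be smooth functions. Then the vector field X = (df₁ ∧ … ∧ df_{q−1}) ⌟ Λ (contraction) satisfies [X, Λ] = 0, i.e., every Hamiltonian vector field of Λ is a Nambu vector field of Λ. -/
import Mathlib


open ExteriorAlgebra

section aux
variable {R : Type*} [CommRing R]

lemma nambu_deriv_one (D : R → R) (hmul : ∀ f g, D (f*g) = f * D g + g * D f) :
    D 1 = 0 := by
  have h := hmul 1 1
  simp only [one_mul, mul_one] at h
  exact (left_eq_add.mp h)

lemma nambu_deriv_prod (D : R → R) (hadd : ∀ f g, D (f+g) = D f + D g)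
    (hmul : ∀ f g, D (f*g) = f * D g + g * D f)
    {ι : Type*} [DecidableEq ι] (s : Finset ι) (f : ι → R) :
    D (∏ i ∈ s, f i) = ∑ i ∈ s, D (f i) * ∏ j ∈ s.erase i, f j := by
  induction s using Finset.induction_on with
  | empty => simp [nambu_deriv_one D hmul]
  | @insert a s ha ih =>
    rw [Finset.prod_insert ha, hmul, ih, Finset.sum_insert ha, Finset.erase_insert ha,
      Finset.mul_sum]
    rw [add_comm]
    congr 1
    · exact (mul_comm _ _)
    · apply Finset.sum_congr rfl
      intro i hi
      have hne : i ≠ a := fun h => ha (h ▸ hi)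
      rw [Finset.erase_insert_of_ne (Ne.symm hne), Finset.prod_insert (fun h => ha (Finset.mem_of_mem_erase h))]
      ring

lemma nambu_deriv_det (D : R → R) (hadd : ∀ f g, D (f+g) = D f + D g)
    (hmul : ∀ f g, D (f*g) = f * D g + g * D f)
    {n : ℕ} (M : Matrix (Fin n) (Fin n) R) :
    D M.det = ∑ r : Fin n, (M.updateRow r (fun c => D (M r c))).det := by
  have hdet : ∀ N : Matrix (Fin n) (Fin n) R,
      N.det = ∑ σ : Equiv.Perm (Fin n), ((Equiv.Perm.sign σ : ℤ) : R) * ∏ i, N i (σ i) := by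
    intro N
    rw [← Matrix.det_transpose N, Matrix.det_apply']
    simp [Matrix.transpose_apply]
  set D' : R →+ R := AddMonoidHom.mk' D hadd with hD'
  have hDcast : ∀ (z : ℤ) (x : R), D ((z : R) * x) = (z : R) * D x := by
    intro z x
    rw [hmul]
    have h1 : D ((z:R)) = 0 := by
      have : ((z:R)) = z • (1:R) := by simp
      have h2 : D' ((z:R)) = 0 := by
        rw [this, map_zsmul D']
        simp [hD', AddMonoidHom.mk'_apply, nambu_deriv_one D hmul]
      exact h2
    rw [h1]
    ring
  rw [hdet M]
  have : D (∑ σ : Equiv.Perm (Fin n), ((Equiv.Perm.sign σ : ℤ) : R) * ∏ i, M i (σ i))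
      = ∑ σ : Equiv.Perm (Fin n), D (((Equiv.Perm.sign σ : ℤ) : R) * ∏ i, M i (σ i)) :=
    map_sum D' _ _
  rw [this]
  have hswap : ∀ σ : Equiv.Perm (Fin n),
      D (((Equiv.Perm.sign σ : ℤ) : R) * ∏ i, M i (σ i))
      = ∑ r : Fin n, ((Equiv.Perm.sign σ : ℤ) : R) *
          ∏ i, (M.updateRow r (fun c => D (M r c))) i (σ i) := by
    intro σ
    rw [hDcast, nambu_deriv_prod D hadd hmul, Finset.mul_sum]
    apply Finset.sum_congr rfl
    intro r _
    have : ∏ i, (M.updateRow r (fun c => D (M r c))) i (σ i)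
        = (M.updateRow r (fun c => D (M r c))) r (σ r) *
          ∏ i ∈ Finset.univ.erase r, (M.updateRow r (fun c => D (M r c))) i (σ i) :=
      (Finset.mul_prod_erase _ _ (Finset.mem_univ r)).symm
    rw [this, Matrix.updateRow_self]
    have h2 : ∏ i ∈ Finset.univ.erase r, (M.updateRow r fun c => D (M r c)) i (σ i)
        = ∏ i ∈ Finset.univ.erase r, M i (σ i) :=
      Finset.prod_congr rfl fun i hi => by
        rw [Matrix.updateRow_ne (Finset.ne_of_mem_erase hi)]
    rw [h2]
  simp_rw [hswap]
  rw [Finset.sum_comm]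
  apply Finset.sum_congr rfl
  intro r _
  rw [hdet]

end aux

section key
variable {R : Type*} [CommRing R]

lemma nambu_key_scalar {m : ℕ} (D : Fin (m+1) → R → R)
    (hadd : ∀ j f g, D j (f+g) = D j f + D j g)
    (hmul : ∀ j f g, D j (f*g) = f * D j g + g * D j f)
    (A : Fin (m+1) → Fin m → R) (S : Fin (m+1) → Fin (m+1) → Fin m → R)
    (hDS : ∀ j i c, D j (A i c) = S j i c)
    (hsymm : ∀ j i, S j i = S i j) :
    ∑ j : Fin (m+1), (-1:R)^(j:ℕ) *
      D j (Matrix.det (Matrix.of fun r c : Fin m => A (j.succAbove r) c)) = 0 := by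
  classical
  set P : Fin (m+1) → Fin (m+1) → Matrix (Fin (m+1)) (Fin (m+1)) R :=
    fun j k => ((Matrix.of fun i => Fin.cons 0 (A i)).updateRow j
        (Fin.cons 1 0)).updateRow k (Fin.cons 0 (S j k)) with hP
  have hPapp : ∀ j k i c, P j k i c =
      if i = k then (Fin.cons 0 (S j k) : Fin (m+1) → R) c
      else if i = j then (Fin.cons 1 0 : Fin (m+1) → R) c
      else (Fin.cons 0 (A i) : Fin (m+1) → R) c := by
    intro j k i c
    by_cases hik : i = k
    · subst hik
      rw [if_pos rfl]
      simp only [hP]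
      rw [Matrix.updateRow_self]
    · rw [if_neg hik]
      by_cases hij : i = j
      · subst hij
        rw [if_pos rfl]
        simp only [hP]
        rw [Matrix.updateRow_ne hik, Matrix.updateRow_self]
      · rw [if_neg hij]
        simp only [hP]
        rw [Matrix.updateRow_ne hik, Matrix.updateRow_ne hij, Matrix.of_apply]
  have hPdiag : ∀ j, (P j j).det = 0 := by
    intro j
    apply Matrix.det_eq_zero_of_column_eq_zero 0
    intro i
    rw [hPapp]
    by_cases h : i = j
    · rw [if_pos h]; simp
    · rw [if_neg h, if_neg h]; simp
  have hPanti : ∀ j k, (P k j).det = - (P j k).det := by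
    intro j k
    by_cases h : j = k
    · subst h; rw [hPdiag]; ring
    · have hswap : P k j = (P j k).submatrix (Equiv.swap j k) id := by
        apply Matrix.ext
        intro i c
        simp only [Matrix.submatrix_apply, id]
        by_cases hij : i = j
        · subst hij
          rw [Equiv.swap_apply_left, hPapp, hPapp]
          rw [if_pos rfl, if_pos rfl, hsymm k i]
        · by_cases hik : i = k
          · subst hik
            rw [Equiv.swap_apply_right, hPapp, hPapp]
            rw [if_neg (fun hh => h hh.symm), if_pos rfl, if_neg h, if_pos rfl]
          · rw [Equiv.swap_apply_of_ne_of_ne hij hik, hPapp, hPapp]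
            rw [if_neg hij, if_neg hik, if_neg hik, if_neg hij]
      rw [hswap, Matrix.det_permute, Equiv.Perm.sign_swap h]
      push_cast
      ring
  have hsum0 : ∑ j : Fin (m+1), ∑ k : Fin (m+1), (P j k).det = 0 := by
    rw [← Finset.sum_product']
    apply Finset.sum_involution (fun p _ => Prod.swap p)
    · intro p _
      change (P p.1 p.2).det + (P p.2 p.1).det = 0
      rw [hPanti p.1 p.2]; ring
    · intro p _ hf hc
      have h12 : p.2 = p.1 := congrArg Prod.fst hc
      apply hf
      show (P p.1 p.2).det = 0
      rw [h12]
      exact hPdiag p.1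
    · intro p _; exact Finset.mem_univ _
    · intro p _; exact Prod.swap_swap p
  have hterm : ∀ j : Fin (m+1),
      (-1:R)^(j:ℕ) * D j (Matrix.det (Matrix.of fun r c : Fin m => A (j.succAbove r) c))
      = ∑ k : Fin (m+1), (P j k).det := by
    intro j
    rw [nambu_deriv_det (D j) (hadd j) (hmul j), Finset.mul_sum]
    have hr : ∀ r : Fin m,
        (-1:R)^(j:ℕ) * ((Matrix.of fun r' c : Fin m => A (j.succAbove r') c).updateRow r
            (fun c => D j ((Matrix.of fun r' c : Fin m => A (j.succAbove r') c) r c))).det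
        = (P j (j.succAbove r)).det := by
      intro r
      set k := j.succAbove r with hk
      have hkj : k ≠ j := Fin.succAbove_ne j r
      rw [Matrix.det_succ_column_zero (P j k)]
      have hcol : ∀ i : Fin (m+1), (P j k) i 0 = if i = j then 1 else 0 := by
        intro i
        rw [hPapp]
        by_cases hik : i = k
        · rw [if_pos hik, if_neg (hik ▸ hkj), Fin.cons_zero]
        · rw [if_neg hik]
          by_cases hij : i = j
          · rw [if_pos hij, if_pos hij, Fin.cons_zero]
          · rw [if_neg hij, if_neg hij, Fin.cons_zero]
      rw [Finset.sum_eq_single j]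
      · rw [hcol j, if_pos rfl, mul_one]
        have hMeq : ((Matrix.of fun r' c : Fin m => A (j.succAbove r') c).updateRow r
            (fun c => D j ((Matrix.of fun r' c : Fin m => A (j.succAbove r') c) r c)))
            = (P j k).submatrix j.succAbove Fin.succ := by
          apply Matrix.ext
          intro r' c
          rw [Matrix.submatrix_apply, hPapp]
          by_cases hrr : r' = r
          · subst hrr
            rw [Matrix.updateRow_self, if_pos hk.symm, Fin.cons_succ]
            rw [Matrix.of_apply, hDS, hk]
          · rw [Matrix.updateRow_ne hrr]
            have h1 : j.succAbove r' ≠ k := by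
              rw [hk]
              exact fun hh => hrr (Fin.succAbove_right_injective hh)
            rw [if_neg h1, if_neg (Fin.succAbove_ne j r'), Fin.cons_succ]
            rfl
        rw [hMeq]
      · intro i _ hij
        rw [hcol i, if_neg hij]
        ring
      · intro h; exact absurd (Finset.mem_univ j) h
    rw [Finset.sum_congr rfl (fun r _ => hr r)]
    rw [Fin.sum_univ_succAbove (fun k => (P j k).det) j, hPdiag j, zero_add]
  rw [Finset.sum_congr rfl (fun j _ => hterm j)]
  exact hsum0

end key

lemma nambu_eraseIdx_ofFn {α : Type*} {n : ℕ} (f : Fin (n+1) → α) (j : Fin (n+1)) :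
    (List.ofFn f).eraseIdx (j:ℕ) = List.ofFn (fun i : Fin n => f (j.succAbove i)) := by
  apply List.ext_getElem
  · rw [List.length_eraseIdx]
    simp [j.isLt]
  · intro i h1 h2
    have hn : i < n := by simpa using h2
    rw [List.getElem_eraseIdx, List.getElem_ofFn]
    by_cases h : i < (j:ℕ)
    · rw [dif_pos h, List.getElem_ofFn]
      congr 1
      have : j.succAbove ⟨i, hn⟩ = Fin.castSucc ⟨i, hn⟩ :=
        Fin.succAbove_of_castSucc_lt j _ (by simpa [Fin.lt_def] using h)
      rw [this]
      rfl
    · rw [dif_neg h, List.getElem_ofFn, List.getElem_ofFn]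
      congr 1
      have : j.succAbove ⟨i, hn⟩ = Fin.succ ⟨i, hn⟩ :=
        Fin.succAbove_of_le_castSucc j _ (by simpa [Fin.le_def] using Nat.le_of_not_lt h)
      rw [this]
      rfl

/-!
STATEMENT 10: For a Nambu structure `Λ` of order `q` and smooth functions
`f₁, …, f_{q−1}`, the Hamiltonian vector field `X = (df₁ ∧ … ∧ df_{q−1}) ⌟ Λ`
satisfies `[X, Λ] = 0`.

Axiomatized setting (local, near a regular point): `R` = smooth functions, `V` =
vector fields (a Lie algebra and `R`-module) acting on functions by the derivations
`D X f = X(f)`; multivector fields live in `ExteriorAlgebra R V` and the Schouten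
bracket `Sch` is characterized on decomposables by the context formula (`hSch`).
The Nambu structure is `Λ = X₁ ∧ … ∧ X_q` with `X₁, …, X_q` pairwise commuting
(its local canonical form `∂/∂x₁ ∧ … ∧ ∂/∂x_q`), and the Hamiltonian vector field
`(df₁ ∧ … ∧ df_{q−1}) ⌟ Λ` is given by its standard expression
`Σ_k (−1)^k det(X_{i}(f_j))_{i ≠ k} • X_k`.
-/
theorem hamiltonian_field_is_nambu_field
    {R : Type*} [CommRing R]
    {V : Type*} [LieRing V] [Module R V]
    (D : V → R → R)
    -- `D X` is a derivation, compatible with the Lie bracket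
    (hDadd : ∀ (X : V) (f g : R), D X (f + g) = D X f + D X g)
    (hDmul : ∀ (X : V) (f g : R), D X (f * g) = f * D X g + g * D X f)
    (hDlie : ∀ (X Y : V) (f : R), D ⁅X, Y⁆ f = D X (D Y f) - D Y (D X f))
    -- Lie bracket Leibniz rule with respect to multiplication by functions
    (hLieSmul : ∀ (f : R) (X Y : V), ⁅X, f • Y⁆ = (D X f) • Y + f • ⁅X, Y⁆)
    (Sch : ExteriorAlgebra R V → ExteriorAlgebra R V → ExteriorAlgebra R V)
    (hSch : ∀ (p q' : ℕ) (Xs : Fin p → V) (Ys : Fin q' → V),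
      Sch ((List.ofFn fun i => ι R (Xs i)).prod) ((List.ofFn fun j => ι R (Ys j)).prod)
        = ∑ i : Fin p, ∑ j : Fin q', ((-1 : ℤ) ^ ((i : ℕ) + (j : ℕ))) •
            (ι R ⁅Xs i, Ys j⁆ *
              ((List.ofFn fun i' => ι R (Xs i')).eraseIdx (i : ℕ)).prod *
              ((List.ofFn fun j' => ι R (Ys j')).eraseIdx (j : ℕ)).prod))
    -- the order of the Nambu structure is `q = m + 1 ≥ 1`
    (m : ℕ) (Xs : Fin (m + 1) → V)
    (hcomm : ∀ i j : Fin (m + 1), ⁅Xs i, Xs j⁆ = 0)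
    -- the functions `f₁, …, f_{q-1}` (there are `q - 1 = m` of them)
    (F : Fin m → R)
    -- the Hamiltonian vector field `X = (df₁ ∧ … ∧ df_{q-1}) ⌟ Λ`
    (X : V)
    (hX : X = ∑ k : Fin (m + 1), ((-1 : ℤ) ^ (k : ℕ)) •
      ((Matrix.det (Matrix.of fun r c : Fin m =>
          D (Xs (k.succAbove r)) (F c))) • Xs k)) :
    Sch ((List.ofFn fun _ : Fin 1 => ι R X).prod)
      ((List.ofFn fun i => ι R (Xs i)).prod) = 0 := by
  classical
  set g : Fin (m+1) → R := fun k => Matrix.det (Matrix.of fun r c : Fin m =>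
    D (Xs (k.succAbove r)) (F c)) with hg
  set Λ : ExteriorAlgebra R V := (List.ofFn fun i => ι R (Xs i)).prod with hΛ
  set W : Fin (m+1) → ExteriorAlgebra R V :=
    fun j => (ExteriorAlgebra.ιMulti R m) (fun r => Xs (j.succAbove r)) with hW
  have hE : ∀ j : Fin (m+1),
      ((List.ofFn fun j' => ι R (Xs j')).eraseIdx (j:ℕ)).prod = W j := by
    intro j
    rw [nambu_eraseIdx_ofFn (fun i => ι R (Xs i)) j]
    simp only [hW]
    rw [ExteriorAlgebra.ιMulti_apply]
  have hcons : ∀ (k j : Fin (m+1)), ι R (Xs k) * W j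
      = (ExteriorAlgebra.ιMulti R (m+1)) (Fin.cons (Xs k) (fun r => Xs (j.succAbove r))) := by
    intro k j
    simp only [hW]
    rw [ExteriorAlgebra.ιMulti_apply, ExteriorAlgebra.ιMulti_apply, List.ofFn_succ,
      List.prod_cons]
    simp [Fin.cons_zero, Fin.cons_succ]
  have hw0 : ∀ (k j : Fin (m+1)), k ≠ j → ι R (Xs k) * W j = 0 := by
    intro k j hkj
    rw [hcons]
    obtain ⟨r, hr⟩ := Fin.exists_succAbove_eq hkj
    exact AlternatingMap.map_eq_zero_of_eq _ _
      (show (Fin.cons (Xs k) (fun r => Xs (j.succAbove r)) : Fin (m+1) → V) r.succ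
          = (Fin.cons (Xs k) (fun r => Xs (j.succAbove r)) : Fin (m+1) → V) 0 by
        simp [Fin.cons_zero, Fin.cons_succ, hr]) (Fin.succ_ne_zero r)
  have hwj : ∀ j : Fin (m+1), ι R (Xs j) * W j = ((-1:ℤ)^(j:ℕ)) • Λ := by
    intro j
    rw [hcons]
    have hfun : Fin.cons (Xs j) (fun r => Xs (j.succAbove r))
        = Xs ∘ ⇑(Equiv.symm (j.cycleRange : Equiv.Perm (Fin (m+1)))) := by
      funext i
      induction i using Fin.cases with
      | zero =>
        simp only [Fin.cons_zero, Function.comp_apply]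
        congr 1
        rw [Equiv.eq_symm_apply, Fin.cycleRange_self]
      | succ r =>
        simp only [Fin.cons_succ, Function.comp_apply]
        congr 1
        rw [Equiv.eq_symm_apply, Fin.cycleRange_succAbove]
    rw [hfun, AlternatingMap.map_perm, Equiv.Perm.sign_symm, Fin.sign_cycleRange]
    rw [hΛ, ExteriorAlgebra.ιMulti_apply]
    simp [Units.smul_def]
  have hD0 : ∀ f : R, D 0 f = 0 := by
    intro f
    have h := hDlie 0 0 f
    rw [lie_zero, sub_self] at h
    exact h
  have hDsymm : ∀ (i j : Fin (m+1)) (f : R),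
      D (Xs i) (D (Xs j) f) = D (Xs j) (D (Xs i) f) := by
    intro i j f
    have h := hDlie (Xs i) (Xs j) f
    rw [hcomm i j, hD0] at h
    exact sub_eq_zero.mp h.symm
  have hbr : ∀ j : Fin (m+1), ⁅X, Xs j⁆
      = ∑ k : Fin (m+1), ((-1:ℤ)^(k:ℕ)) • ((-(D (Xs j) (g k))) • Xs k) := by
    intro j
    set L : V →+ V := AddMonoidHom.mk' (fun v => ⁅v, Xs j⁆)
      (fun a b => add_lie a b (Xs j)) with hL
    have hLX : ⁅X, Xs j⁆ = L X := rfl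
    rw [hLX, hX, map_sum]
    apply Finset.sum_congr rfl
    intro k _
    rw [map_zsmul]
    congr 1
    show ⁅g k • Xs k, Xs j⁆ = (-(D (Xs j) (g k))) • Xs k
    rw [← lie_skew, hLieSmul, hcomm, smul_zero, add_zero, neg_smul]
  have hkey : ∑ j : Fin (m+1), (-1:R)^(j:ℕ) * D (Xs j) (g j) = 0 :=
    nambu_key_scalar (fun j => D (Xs j)) (fun j => hDadd (Xs j)) (fun j => hDmul (Xs j))
      (fun i c => D (Xs i) (F c)) (fun j i c => D (Xs j) (D (Xs i) (F c)))
      (fun _ _ _ => rfl) (fun j i => funext fun c => hDsymm j i (F c))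
  have hS := hSch 1 (m+1) (fun _ => X) Xs
  have hone : (List.ofFn fun _ : Fin 1 => ι R X) = [ι R X] := by
    simp [List.ofFn_succ]
  simp only [Fin.sum_univ_one, Fin.val_zero, zero_add, hone, List.eraseIdx_cons_zero,
    List.eraseIdx_nil, List.prod_nil, mul_one] at hS
  rw [hΛ, hone, hS]
  have hterm : ∀ j : Fin (m+1),
      ((-1:ℤ)^(j:ℕ)) • (ι R ⁅X, Xs j⁆ *
        ((List.ofFn fun j' => ι R (Xs j')).eraseIdx (j:ℕ)).prod)
      = (-((-1:R)^(j:ℕ) * D (Xs j) (g j))) • Λ := by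
    intro j
    rw [hE j, hbr j, map_sum, Finset.sum_mul, Finset.smul_sum]
    rw [Finset.sum_eq_single j]
    · rw [map_zsmul, map_smul, smul_mul_assoc, smul_mul_assoc, hwj j]
      rw [smul_smul]
      have heven : (-1:ℤ)^(j:ℕ) * (-1:ℤ)^(j:ℕ) = 1 := by
        rw [← pow_add]
        exact Even.neg_one_pow ⟨_, rfl⟩
      rw [heven, one_smul, ← Int.cast_smul_eq_zsmul R, smul_smul]
      congr 1
      push_cast
      ring
    · intro k _ hkj
      rw [map_zsmul, map_smul, smul_mul_assoc, smul_mul_assoc, hw0 k j hkj,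
        smul_zero, smul_zero, smul_zero]
    · intro h; exact absurd (Finset.mem_univ j) h
  rw [Finset.sum_congr rfl (fun j _ => hterm j), ← Finset.sum_smul]
  have hzero : ∑ j : Fin (m+1), -((-1:R)^(j:ℕ) * D (Xs j) (g j)) = 0 := by
    rw [Finset.sum_neg_distrib, hkey, neg_zero]
  rw [hzero, zero_smul]
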